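/- Let (λ_k) be a sequence of positive reals with |log λ_k| → ∞, and let u, v be Schwartz functions on ℝ^N. Then ∫_{ℝ^N} |ξ|^{2s} (D_{λ_k} u)^(ξ) · conj(v̂(ξ)) dξ → 0 as k → ∞, where D_λ u(x) = λ^{(N−2s)/2} u(λx) and s ∈ (0,1), N > 2s. -/

import Mathlib

open MeasureTheory Filter Topology FourierTransform
open scoped RealInnerProductSpace

-- aux 1: integrability of ‖ξ‖^(2s) * ‖f ξ‖ for Schwartz f, 0 ≤ 2s ≤ 2
lemma aux_int {N : ℕ} {s : ℝ} (hs0 : 0 ≤ 2 * s) (hs2 : 2 * s ≤ 2)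
    (f : SchwartzMap (EuclideanSpace ℝ (Fin N)) ℂ) :
    Integrable (fun ξ : EuclideanSpace ℝ (Fin N) => ‖ξ‖ ^ (2 * s) * ‖f ξ‖) := by
  have h1 : Integrable (fun ξ : EuclideanSpace ℝ (Fin N) => ‖f ξ‖) volume :=
    f.integrable.norm
  have h2 := f.integrable_pow_mul volume 2
  have hcont : Continuous (fun ξ : EuclideanSpace ℝ (Fin N) => ‖ξ‖ ^ (2 * s) * ‖f ξ‖) :=
    (continuous_norm.rpow_const (fun x => Or.inr hs0)).mul f.continuous.norm
  refine (h1.add h2).mono hcont.aestronglyMeasurable (Filter.Eventually.of_forall ?_)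
  intro ξ
  have hb : ‖ξ‖ ^ (2 * s) ≤ 1 + ‖ξ‖ ^ (2 : ℕ) := by
    rcases le_or_gt ‖ξ‖ 1 with h | h
    · have := Real.rpow_le_one (norm_nonneg ξ) h hs0
      nlinarith [sq_nonneg ‖ξ‖]
    · have h1' : (1:ℝ) ≤ ‖ξ‖ := h.le
      have h2' : ‖ξ‖ ^ (2 * s) ≤ ‖ξ‖ ^ (((2:ℕ)):ℝ) :=
        Real.rpow_le_rpow_of_exponent_le h1' (by exact_mod_cast hs2)
      rw [Real.rpow_natCast] at h2'
      linarith
  have hnn : 0 ≤ ‖ξ‖ ^ (2 * s) * ‖f ξ‖ :=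
    mul_nonneg (Real.rpow_nonneg (norm_nonneg _) _) (norm_nonneg _)
  rw [Real.norm_of_nonneg hnn]
  have : (1 + ‖ξ‖ ^ (2:ℕ)) * ‖f ξ‖ ≤ ‖‖f ξ‖ + ‖ξ‖ ^ (2:ℕ) * ‖f ξ‖‖ := by
    rw [Real.norm_of_nonneg (by positivity)]; ring_nf; rfl
  calc ‖ξ‖ ^ (2 * s) * ‖f ξ‖ ≤ (1 + ‖ξ‖ ^ (2:ℕ)) * ‖f ξ‖ :=
        mul_le_mul_of_nonneg_right hb (norm_nonneg _)
    _ ≤ _ := this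

-- aux 2: dilation of the Fourier integral
lemma aux_dilate {N : ℕ} (f : SchwartzMap (EuclideanSpace ℝ (Fin N)) ℂ) (c : ℂ) {l : ℝ}
    (hl : 0 < l) (ξ : EuclideanSpace ℝ (Fin N)) :
    FourierTransform.fourier (fun x => c * f (l • x)) ξ
      = ((l ^ N : ℝ)⁻¹ : ℂ) * (c * FourierTransform.fourier (⇑f) (l⁻¹ • ξ)) := by
  rw [Real.fourier_eq]
  have hcs := Measure.integral_comp_smul (μ := (volume : Measure (EuclideanSpace ℝ (Fin N))))
    (fun y : EuclideanSpace ℝ (Fin N) => 𝐞 (-⟪l⁻¹ • y, ξ⟫) • (c * f y)) l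
  simp only [inv_smul_smul₀ hl.ne', finrank_euclideanSpace_fin] at hcs
  rw [hcs]
  have inner_eq : ∀ y : EuclideanSpace ℝ (Fin N), ⟪l⁻¹ • y, ξ⟫ = ⟪y, l⁻¹ • ξ⟫ := by
    intro y; rw [real_inner_smul_left, real_inner_smul_right]
  have : ∫ y : EuclideanSpace ℝ (Fin N), 𝐞 (-⟪l⁻¹ • y, ξ⟫) • (c * f y)
      = c * FourierTransform.fourier (⇑f) (l⁻¹ • ξ) := by
    rw [Real.fourier_eq, ← integral_const_mul]
    congr 1; ext y
    simp only [inner_eq, Circle.smul_def, smul_eq_mul]; ring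
  rw [this, abs_of_nonneg (by positivity : (0:ℝ) ≤ (l ^ N)⁻¹)]
  simp [Complex.real_smul]

lemma aux_bound (N : ℕ) (s : ℝ) (hs : s ∈ Set.Ioo (0:ℝ) 1)
    (u v : SchwartzMap (EuclideanSpace ℝ (Fin N)) ℂ) :
    ∃ C : ℝ, 0 ≤ C ∧ ∀ l : ℝ, 0 < l →
      ‖∫ ξ : EuclideanSpace ℝ (Fin N),
          ((‖ξ‖ ^ (2 * s) : ℝ) : ℂ) *
            (FourierTransform.fourier
                (fun x => ((l ^ (((N : ℝ) - 2 * s) / 2) : ℝ) : ℂ) * u (l • x)) ξ *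
              (starRingEnd ℂ) (FourierTransform.fourier (fun x => v x) ξ))‖
        ≤ C * Real.exp (-(((N : ℝ) + 2 * s) / 2) * |Real.log l|) := by
  obtain ⟨hs0', hs1⟩ := hs
  have hs0 : (0:ℝ) ≤ 2 * s := by linarith
  have hs2 : (2:ℝ) * s ≤ 2 := by linarith
  set E := EuclideanSpace ℝ (Fin N)
  set uh := SchwartzMap.fourierTransformCLM ℂ u with huh
  set vh := SchwartzMap.fourierTransformCLM ℂ v with hvh
  set a : ℝ := ((N : ℝ) - 2 * s) / 2 with ha
  set c : ℝ := ((N : ℝ) + 2 * s) / 2 with hc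
  set Iu : ℝ := ∫ x : E, ‖u x‖ with hIu
  set Iv : ℝ := ∫ x : E, ‖v x‖ with hIv
  set Ju : ℝ := ∫ ξ : E, ‖ξ‖ ^ (2*s) * ‖uh ξ‖ with hJu
  set Jv : ℝ := ∫ ξ : E, ‖ξ‖ ^ (2*s) * ‖vh ξ‖ with hJv
  have hIu0 : 0 ≤ Iu := integral_nonneg fun _ => norm_nonneg _
  have hIv0 : 0 ≤ Iv := integral_nonneg fun _ => norm_nonneg _
  have hJu0 : 0 ≤ Ju := integral_nonneg fun ξ =>
    mul_nonneg (Real.rpow_nonneg (norm_nonneg _) _) (norm_nonneg _)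
  have hJv0 : 0 ≤ Jv := integral_nonneg fun ξ =>
    mul_nonneg (Real.rpow_nonneg (norm_nonneg _) _) (norm_nonneg _)
  refine ⟨max (Iu * Jv) (Iv * Ju), le_max_iff.2 (Or.inl (mul_nonneg hIu0 hJv0)), ?_⟩
  intro l hl
  have hexp0 : (0:ℝ) < Real.exp (-c * |Real.log l|) := Real.exp_pos _
  -- norm of integrand
  have hnormF : ∀ ξ : E,
      ‖((‖ξ‖ ^ (2 * s) : ℝ) : ℂ) *
          (FourierTransform.fourier (fun x => ((l ^ a : ℝ) : ℂ) * u (l • x)) ξ *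
            (starRingEnd ℂ) (FourierTransform.fourier (fun x => v x) ξ))‖
        = ‖ξ‖ ^ (2 * s) *
            (‖FourierTransform.fourier (fun x => ((l ^ a : ℝ) : ℂ) * u (l • x)) ξ‖ * ‖vh ξ‖) := by
    intro ξ
    have h1 : FourierTransform.fourier (fun x => v x) ξ = vh ξ := rfl
    rw [h1, norm_mul, norm_mul, Complex.norm_real, RCLike.norm_conj,
      Real.norm_of_nonneg (Real.rpow_nonneg (norm_nonneg _) _)]
  rcases le_total 1 l with hl1 | hl1
  · -- case l ≥ 1
    have hFT : ∀ ξ : E,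
        ‖FourierTransform.fourier (fun x => ((l ^ a : ℝ) : ℂ) * u (l • x)) ξ‖
          ≤ l ^ (-c) * Iu := by
      intro ξ
      have h0 := VectorFourier.norm_fourierIntegral_le_integral_norm 𝐞 volume (innerₗ E)
        (fun x => ((l ^ a : ℝ) : ℂ) * u (l • x)) ξ
      have h1 : (∫ x : E, ‖((l ^ a : ℝ) : ℂ) * u (l • x)‖)
          = l ^ a * ∫ x : E, ‖u (l • x)‖ := by
        simp_rw [norm_mul, Complex.norm_real,
          Real.norm_of_nonneg (Real.rpow_nonneg hl.le _)]
        exact integral_const_mul _ _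
      have h2 : (∫ x : E, ‖u (l • x)‖) = ((l ^ N : ℝ))⁻¹ * Iu := by
        have hfr : Module.finrank ℝ E = N := finrank_euclideanSpace_fin
        have h := Measure.integral_comp_smul_of_nonneg (volume : Measure E)
          (fun y : E => ‖u y‖) l (hR := hl.le)
        rw [hfr, smul_eq_mul] at h
        exact h
      have harith : l ^ a * ((l ^ N : ℝ))⁻¹ = l ^ (-c) := by
        rw [← Real.rpow_natCast l N, ← Real.rpow_neg hl.le, ← Real.rpow_add hl]
        congr 1; rw [ha, hc]; ring
      calc ‖FourierTransform.fourier (fun x => ((l ^ a : ℝ) : ℂ) * u (l • x)) ξ‖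
          ≤ ∫ x : E, ‖((l ^ a : ℝ) : ℂ) * u (l • x)‖ := h0
        _ = l ^ a * (((l ^ N : ℝ))⁻¹ * Iu) := by rw [h1, h2]
        _ = l ^ (-c) * Iu := by rw [← mul_assoc, harith]
    have hrc : l ^ (-c) = Real.exp (-c * |Real.log l|) := by
      rw [Real.rpow_def_of_pos hl, abs_of_nonneg (Real.log_nonneg hl1), mul_comm]
    calc ‖∫ ξ : E, ((‖ξ‖ ^ (2 * s) : ℝ) : ℂ) *
            (FourierTransform.fourier (fun x => ((l ^ a : ℝ) : ℂ) * u (l • x)) ξ *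
              (starRingEnd ℂ) (FourierTransform.fourier (fun x => v x) ξ))‖
        ≤ ∫ ξ : E, ‖((‖ξ‖ ^ (2 * s) : ℝ) : ℂ) *
            (FourierTransform.fourier (fun x => ((l ^ a : ℝ) : ℂ) * u (l • x)) ξ *
              (starRingEnd ℂ) (FourierTransform.fourier (fun x => v x) ξ))‖ :=
          norm_integral_le_integral_norm _
      _ ≤ ∫ ξ : E, (l ^ (-c) * Iu) * (‖ξ‖ ^ (2 * s) * ‖vh ξ‖) := by
          refine integral_mono_of_nonneg (Filter.Eventually.of_forall fun ξ => norm_nonneg _)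
            ((aux_int hs0 hs2 vh).const_mul _) (Filter.Eventually.of_forall fun ξ => ?_)
          beta_reduce
          rw [hnormF ξ]
          have h1 : ‖ξ‖ ^ (2 * s) *
              (‖FourierTransform.fourier (fun x => ((l ^ a : ℝ) : ℂ) * u (l • x)) ξ‖ * ‖vh ξ‖)
              ≤ ‖ξ‖ ^ (2 * s) * ((l ^ (-c) * Iu) * ‖vh ξ‖) :=
            mul_le_mul_of_nonneg_left
              (mul_le_mul_of_nonneg_right (hFT ξ) (norm_nonneg _))
              (Real.rpow_nonneg (norm_nonneg _) _)
          calc _ ≤ ‖ξ‖ ^ (2 * s) * ((l ^ (-c) * Iu) * ‖vh ξ‖) := h1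
            _ = (l ^ (-c) * Iu) * (‖ξ‖ ^ (2 * s) * ‖vh ξ‖) := by ring
      _ = (l ^ (-c) * Iu) * Jv := integral_const_mul _ _
      _ = (Iu * Jv) * l ^ (-c) := by ring
      _ ≤ max (Iu * Jv) (Iv * Ju) * Real.exp (-c * |Real.log l|) := by
          rw [hrc]
          exact mul_le_mul_of_nonneg_right (le_max_left _ _) hexp0.le
  · -- case l ≤ 1
    have hFTeq : ∀ ξ : E,
        ‖FourierTransform.fourier (fun x => ((l ^ a : ℝ) : ℂ) * u (l • x)) ξ‖
          = ((l ^ N : ℝ))⁻¹ * (l ^ a * ‖uh (l⁻¹ • ξ)‖) := by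
      intro ξ
      rw [aux_dilate u _ hl ξ]
      have h1 : FourierTransform.fourier (⇑u) (l⁻¹ • ξ) = uh (l⁻¹ • ξ) := rfl
      rw [norm_mul, norm_mul, h1, norm_inv, Complex.norm_real, Complex.norm_real,
        Real.norm_eq_abs, Real.norm_eq_abs, abs_of_pos (pow_pos hl N),
        abs_of_nonneg (Real.rpow_nonneg hl.le a)]
    have hvb : ∀ ξ : E, ‖vh ξ‖ ≤ Iv := fun ξ =>
      VectorFourier.norm_fourierIntegral_le_integral_norm 𝐞 volume (innerₗ E) (⇑v) ξ
    set K : ℝ := ((l ^ N : ℝ))⁻¹ * l ^ a * Iv with hK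
    have hK0 : 0 ≤ K := by positivity
    have hGeq : (fun η : E => ‖l • η‖ ^ (2 * s) * ‖uh η‖)
        = fun η : E => l ^ (2 * s) * (‖η‖ ^ (2 * s) * ‖uh η‖) := by
      ext η
      rw [norm_smul, Real.norm_eq_abs, abs_of_pos hl,
        Real.mul_rpow hl.le (norm_nonneg _)]
      ring
    have hG : Integrable (fun η : E => ‖l • η‖ ^ (2 * s) * ‖uh η‖) := by
      rw [hGeq]; exact (aux_int hs0 hs2 uh).const_mul _
    have hGcompeq : (fun ξ : E => ‖l • (l⁻¹ • ξ)‖ ^ (2 * s) * ‖uh (l⁻¹ • ξ)‖)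
        = fun ξ : E => ‖ξ‖ ^ (2 * s) * ‖uh (l⁻¹ • ξ)‖ := by
      ext ξ; rw [smul_inv_smul₀ hl.ne']
    have hGcomp : Integrable (fun ξ : E => ‖ξ‖ ^ (2 * s) * ‖uh (l⁻¹ • ξ)‖) := by
      rw [← hGcompeq]
      exact (integrable_comp_smul_iff volume _ (inv_ne_zero hl.ne')).2 hG
    have hint : (∫ ξ : E, ‖ξ‖ ^ (2 * s) * ‖uh (l⁻¹ • ξ)‖)
        = l ^ (N : ℕ) * (l ^ (2 * s) * Ju) := by
      rw [← hGcompeq]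
      have := Measure.integral_comp_inv_smul (volume : Measure E)
        (fun η : E => ‖l • η‖ ^ (2 * s) * ‖uh η‖) l
      rw [this, finrank_euclideanSpace_fin, abs_of_pos (pow_pos hl N), smul_eq_mul]
      congr 1
      rw [hGeq]
      exact integral_const_mul _ _
    have hrc : l ^ c = Real.exp (-c * |Real.log l|) := by
      rw [Real.rpow_def_of_pos hl, abs_of_nonpos (Real.log_nonpos hl.le hl1)]
      ring_nf
    have harith : K * (l ^ (N:ℕ) * (l ^ (2 * s) * Ju)) = (Iv * Ju) * l ^ c := by
      rw [hK]
      have h1 : ((l ^ N : ℝ))⁻¹ * (l ^ (N:ℕ) : ℝ) = 1 :=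
        inv_mul_cancel₀ (by positivity)
      have h2 : l ^ a * l ^ (2 * s) = l ^ c := by
        rw [← Real.rpow_add hl]; congr 1; rw [ha, hc]; ring
      calc ((l ^ N : ℝ))⁻¹ * l ^ a * Iv * (l ^ (N:ℕ) * (l ^ (2 * s) * Ju))
          = (((l ^ N : ℝ))⁻¹ * (l ^ (N:ℕ) : ℝ)) * ((l ^ a * l ^ (2 * s)) * (Iv * Ju)) := by
            ring
        _ = (Iv * Ju) * l ^ c := by rw [h1, h2]; ring
    calc ‖∫ ξ : E, ((‖ξ‖ ^ (2 * s) : ℝ) : ℂ) *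
            (FourierTransform.fourier (fun x => ((l ^ a : ℝ) : ℂ) * u (l • x)) ξ *
              (starRingEnd ℂ) (FourierTransform.fourier (fun x => v x) ξ))‖
        ≤ ∫ ξ : E, ‖((‖ξ‖ ^ (2 * s) : ℝ) : ℂ) *
            (FourierTransform.fourier (fun x => ((l ^ a : ℝ) : ℂ) * u (l • x)) ξ *
              (starRingEnd ℂ) (FourierTransform.fourier (fun x => v x) ξ))‖ :=
          norm_integral_le_integral_norm _
      _ ≤ ∫ ξ : E, K * (‖ξ‖ ^ (2 * s) * ‖uh (l⁻¹ • ξ)‖) := by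
          refine integral_mono_of_nonneg (Filter.Eventually.of_forall fun ξ => norm_nonneg _)
            (hGcomp.const_mul _) (Filter.Eventually.of_forall fun ξ => ?_)
          beta_reduce
          rw [hnormF ξ, hFTeq ξ]
          have h1 : ‖ξ‖ ^ (2 * s) * (((l ^ N : ℝ))⁻¹ * (l ^ a * ‖uh (l⁻¹ • ξ)‖) * ‖vh ξ‖)
              ≤ ‖ξ‖ ^ (2 * s) * (((l ^ N : ℝ))⁻¹ * (l ^ a * ‖uh (l⁻¹ • ξ)‖) * Iv) :=
            mul_le_mul_of_nonneg_left
              (mul_le_mul_of_nonneg_left (hvb ξ) (by positivity))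
              (Real.rpow_nonneg (norm_nonneg _) _)
          calc _ ≤ ‖ξ‖ ^ (2 * s) * (((l ^ N : ℝ))⁻¹ * (l ^ a * ‖uh (l⁻¹ • ξ)‖) * Iv) := h1
            _ = K * (‖ξ‖ ^ (2 * s) * ‖uh (l⁻¹ • ξ)‖) := by rw [hK]; ring
      _ = K * (l ^ (N:ℕ) * (l ^ (2 * s) * Ju)) := by rw [integral_const_mul, hint]
      _ = (Iv * Ju) * l ^ c := harith
      _ ≤ max (Iu * Jv) (Iv * Ju) * Real.exp (-c * |Real.log l|) := by
          rw [hrc]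
          exact mul_le_mul_of_nonneg_right (le_max_right _ _) hexp0.le

theorem stmt_8 (N : ℕ) (s : ℝ) (hs : s ∈ Set.Ioo (0:ℝ) 1) (hN : 2 * s < (N : ℝ))
    (lk : ℕ → ℝ) (hpos : ∀ k, 0 < lk k)
    (hlog : Tendsto (fun k => |Real.log (lk k)|) atTop atTop)
    (u v : SchwartzMap (EuclideanSpace ℝ (Fin N)) ℂ) :
    Tendsto (fun k => ∫ ξ : EuclideanSpace ℝ (Fin N),
        ((‖ξ‖ ^ (2 * s) : ℝ) : ℂ) *
          (FourierTransform.fourier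
              (fun x => ((lk k ^ (((N : ℝ) - 2 * s) / 2) : ℝ) : ℂ) * u (lk k • x)) ξ *
            (starRingEnd ℂ) (FourierTransform.fourier (fun x => v x) ξ)))
      atTop (nhds 0) := by
  obtain ⟨C, hC0, hC⟩ := aux_bound N s hs u v
  have hcneg : -(((N : ℝ) + 2 * s) / 2) < 0 := by
    have h1 : (0:ℝ) ≤ (N : ℝ) := Nat.cast_nonneg N
    have h2 := hs.1
    linarith
  refine squeeze_zero_norm (fun k => hC (lk k) (hpos k)) ?_
  have h1 : Tendsto (fun k => -(((N : ℝ) + 2 * s) / 2) * |Real.log (lk k)|) atTop atBot :=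
    (Filter.tendsto_const_mul_atBot_of_neg hcneg).2 hlog
  have h2 : Tendsto (fun k =>
      Real.exp (-(((N : ℝ) + 2 * s) / 2) * |Real.log (lk k)|)) atTop (nhds 0) :=
    Real.tendsto_exp_atBot.comp h1
  simpa using h2.const_mul C
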